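/- arXiv:2302.11505 — 3 statements merged into one kernel-verified Lean document; each statement's English description precedes it below -/
import Mathlib

section
/- (Interaction-regression weight identities.) Assume positivity and that the covariance matrix of (D,A,AD) is positive definite. Then the interaction-regression weights satisfy Σ_{a∈𝒜} ω_dce^i(a) = 1, Σ_{a∈𝒜} ω_ind^i(a) = 0, and Σ_{a∈𝒜} a_u·ω_ind^i(a) = 0 for every coordinate u = 1,…,K. -/
open MeasureTheory ProbabilityTheory BigOperators

noncomputable section

variable {Ω : Type} [MeasurableSpace Ω] {K : ℕ}

/-- Expectation of a real-valued random variable. -/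
def Exp (P : Measure Ω) (Z : Ω → ℝ) : ℝ := ∫ ω, Z ω ∂P

/-- Probability of an event, as a real number. -/
def Pr (P : Measure Ω) (s : Set Ω) : ℝ := (P s).toReal

/-- Conditional expectation given an event, defined as a ratio. -/
def CE (P : Measure Ω) (Z : Ω → ℝ) (s : Set Ω) : ℝ :=
  Exp P (fun ω => Z ω * s.indicator (fun _ => (1:ℝ)) ω) / Pr P s

/-- Covariance of two real-valued random variables. -/
def Cov (P : Measure Ω) (Z W : Ω → ℝ) : ℝ :=
  Exp P (fun ω => Z ω * W ω) - Exp P Z * Exp P W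

/-- The event {D = d, A = a}. -/
def evDA (D : Ω → ℕ) (A : Ω → Fin K → ℕ) (d : ℕ) (a : Fin K → ℕ) : Set Ω :=
  {ω | D ω = d ∧ A ω = a}

/-- The event {D = d}. -/
def evD (D : Ω → ℕ) (d : ℕ) : Set Ω := {ω | D ω = d}

/-- The event {A = a}. -/
def evA (A : Ω → Fin K → ℕ) (a : Fin K → ℕ) : Set Ω := {ω | A ω = a}

/-- π_d(a) = P(A = a | D = d). -/
def piP (P : Measure Ω) (D : Ω → ℕ) (A : Ω → Fin K → ℕ) (d : ℕ) (a : Fin K → ℕ) : ℝ :=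
  Pr P (evDA D A d a) / Pr P (evD D d)

/-- The observed outcome Y = Σ_{(d,a)} Y(d,a)·1{D=d, A=a}. -/
def Yobs (D : Ω → ℕ) (A : Ω → Fin K → ℕ) (𝒜 : Finset (Fin K → ℕ))
    (Ypot : ℕ → (Fin K → ℕ) → Ω → ℝ) : Ω → ℝ :=
  fun ω => ∑ d ∈ ({0, 1} : Finset ℕ), ∑ a ∈ 𝒜,
    Ypot d a ω * (if D ω = d ∧ A ω = a then (1:ℝ) else 0)

/-- μ(d,a) = E[Y(d,a)]. -/
def muP (P : Measure Ω) (Ypot : ℕ → (Fin K → ℕ) → Ω → ℝ) (d : ℕ) (a : Fin K → ℕ) : ℝ :=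
  Exp P (Ypot d a)

/-- The random vector (D, A) as a real-valued family indexed by Unit ⊕ Fin K. -/
def DAvec (D : Ω → ℕ) (A : Ω → Fin K → ℕ) : Unit ⊕ Fin K → Ω → ℝ :=
  Sum.elim (fun _ ω => (D ω : ℝ)) (fun j ω => (A ω j : ℝ))

/-- The (K+1)×(K+1) covariance matrix of (D, A). -/
def covDAmat (P : Measure Ω) (D : Ω → ℕ) (A : Ω → Fin K → ℕ) :
    Matrix (Unit ⊕ Fin K) (Unit ⊕ Fin K) ℝ :=
  Matrix.of fun i j => Cov P (DAvec D A i) (DAvec D A j)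

/-- The K×K covariance matrix Var(A). -/
def varAmat (P : Measure Ω) (A : Ω → Fin K → ℕ) : Matrix (Fin K) (Fin K) ℝ :=
  Matrix.of fun i j => Cov P (fun ω => (A ω i : ℝ)) (fun ω => (A ω j : ℝ))

/-- The row vector Cov(D, A). -/
def covDA (P : Measure Ω) (D : Ω → ℕ) (A : Ω → Fin K → ℕ) : Fin K → ℝ :=
  fun j => Cov P (fun ω => (D ω : ℝ)) (fun ω => (A ω j : ℝ))

/-- M = Cov(D,A) ⬝ Var(A)⁻¹. -/
def Mlong (P : Measure Ω) (D : Ω → ℕ) (A : Ω → Fin K → ℕ) : Fin K → ℝ :=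
  fun j => ∑ i, covDA P D A i * (varAmat P A)⁻¹ i j

/-- Var(D). -/
def varD (P : Measure Ω) (D : Ω → ℕ) : ℝ :=
  Cov P (fun ω => (D ω : ℝ)) (fun ω => (D ω : ℝ))

/-- denom = Var(D) − Cov(D,A)·Var(A)⁻¹·Cov(A,D). -/
def denomL (P : Measure Ω) (D : Ω → ℕ) (A : Ω → Fin K → ℕ) : ℝ :=
  varD P D - ∑ j, Mlong P D A j * covDA P D A j

/-- The long-regression weight ω_dce^l(a). -/
def wdceL (P : Measure Ω) (D : Ω → ℕ) (A : Ω → Fin K → ℕ) (a : Fin K → ℕ) : ℝ :=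
  piP P D A 1 a *
    (varD P D - Pr P (evD D 1) *
      ∑ j, Mlong P D A j * ((a j : ℝ) - Exp P (fun ω => (A ω j : ℝ)))) / denomL P D A

/-- The long-regression weight ω_ind^l(a). -/
def windL (P : Measure Ω) (D : Ω → ℕ) (A : Ω → Fin K → ℕ) (a : Fin K → ℕ) : ℝ :=
  (varD P D * (piP P D A 1 a - piP P D A 0 a) -
    Pr P (evA A a) * ∑ j, Mlong P D A j * ((a j : ℝ) - Exp P (fun ω => (A ω j : ℝ))))
  / denomL P D A

/-- The residual of the long regression of Y on (1, D, A). -/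
def residLong (D : Ω → ℕ) (A : Ω → Fin K → ℕ) (𝒜 : Finset (Fin K → ℕ))
    (Ypot : ℕ → (Fin K → ℕ) → Ω → ℝ) (Δ θ₀ : ℝ) (θ : Fin K → ℝ) : Ω → ℝ :=
  fun ω => Yobs D A 𝒜 Ypot ω - Δ * (D ω : ℝ) - θ₀ - ∑ j, θ j * (A ω j : ℝ)

/-- The random vector W = (A, A·D) as a real-valued family indexed by Fin K ⊕ Fin K. -/
def Wvec (D : Ω → ℕ) (A : Ω → Fin K → ℕ) : Fin K ⊕ Fin K → Ω → ℝ :=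
  Sum.elim (fun j ω => (A ω j : ℝ)) (fun j ω => (A ω j : ℝ) * (D ω : ℝ))

/-- The 2K×2K covariance matrix Var(W), W = (A, AD). -/
def varWmat (P : Measure Ω) (D : Ω → ℕ) (A : Ω → Fin K → ℕ) :
    Matrix (Fin K ⊕ Fin K) (Fin K ⊕ Fin K) ℝ :=
  Matrix.of fun u v => Cov P (Wvec D A u) (Wvec D A v)

/-- The row vector Cov(D, W). -/
def covDW (P : Measure Ω) (D : Ω → ℕ) (A : Ω → Fin K → ℕ) : Fin K ⊕ Fin K → ℝ :=
  fun u => Cov P (fun ω => (D ω : ℝ)) (Wvec D A u)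

/-- M = Cov(D,W) ⬝ Var(W)⁻¹ for the interaction regression. -/
def Minter (P : Measure Ω) (D : Ω → ℕ) (A : Ω → Fin K → ℕ) : Fin K ⊕ Fin K → ℝ :=
  fun v => ∑ u, covDW P D A u * (varWmat P D A)⁻¹ u v

/-- denom = Var(D) − M·Cov(W,D) for the interaction regression. -/
def denomI (P : Measure Ω) (D : Ω → ℕ) (A : Ω → Fin K → ℕ) : ℝ :=
  varD P D - ∑ v, Minter P D A v * covDW P D A v

/-- E[A_j | D = 1]. -/
def condA1 (P : Measure Ω) (D : Ω → ℕ) (A : Ω → Fin K → ℕ) (j : Fin K) : ℝ :=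
  CE P (fun ω => (A ω j : ℝ)) (evD D 1)

/-- The random vector (D, A, AD) as a real-valued family. -/
def DADvec (D : Ω → ℕ) (A : Ω → Fin K → ℕ) : Unit ⊕ (Fin K ⊕ Fin K) → Ω → ℝ :=
  Sum.elim (fun _ ω => (D ω : ℝ)) (Wvec D A)

/-- The (2K+1)×(2K+1) covariance matrix of (D, A, AD). -/
def covDADmat (P : Measure Ω) (D : Ω → ℕ) (A : Ω → Fin K → ℕ) :
    Matrix (Unit ⊕ (Fin K ⊕ Fin K)) (Unit ⊕ (Fin K ⊕ Fin K)) ℝ :=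
  Matrix.of fun i j => Cov P (DADvec D A i) (DADvec D A j)

/-- The interaction-regression weight ω_dce^i(a). -/
def wdceI (P : Measure Ω) (D : Ω → ℕ) (A : Ω → Fin K → ℕ) (a : Fin K → ℕ) : ℝ :=
  piP P D A 1 a *
    (varD P D
      - Pr P (evD D 1) *
          ∑ j, Minter P D A (Sum.inl j) * ((a j : ℝ) - Exp P (fun ω => (A ω j : ℝ)))
      - Pr P (evD D 1) *
          ∑ j, Minter P D A (Sum.inr j) * ((a j : ℝ) - Pr P (evD D 1) * condA1 P D A j))
  / denomI P D A

/-- The interaction-regression weight ω_ind^i(a). -/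
def windI (P : Measure Ω) (D : Ω → ℕ) (A : Ω → Fin K → ℕ) (a : Fin K → ℕ) : ℝ :=
  (varD P D * (piP P D A 1 a - piP P D A 0 a)
    - ∑ j, Minter P D A (Sum.inl j) * Pr P (evA A a) * ((a j : ℝ) - Exp P (fun ω => (A ω j : ℝ)))
    - Pr P (evD D 1) *
        ∑ j, Minter P D A (Sum.inr j) *
          (piP P D A 1 a * (a j : ℝ) - Pr P (evA A a) * condA1 P D A j))
  / denomI P D A

/-- The residual of the interaction regression of Y on (1, D, A, AD). -/
def residInter (D : Ω → ℕ) (A : Ω → Fin K → ℕ) (𝒜 : Finset (Fin K → ℕ))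
    (Ypot : ℕ → (Fin K → ℕ) → Ω → ℝ) (Δ θ₀ : ℝ) (θ lam : Fin K → ℝ) : Ω → ℝ :=
  fun ω => Yobs D A 𝒜 Ypot ω - Δ * (D ω : ℝ) - θ₀ - (∑ j, θ j * (A ω j : ℝ))
    - ∑ j, lam j * (A ω j : ℝ) * (D ω : ℝ)

/-- P(D = d | A = a). -/
def condDgivenA (P : Measure Ω) (D : Ω → ℕ) (A : Ω → Fin K → ℕ) (d : ℕ) (a : Fin K → ℕ) : ℝ :=
  Pr P (evDA D A d a) / Pr P (evA A a)

/-- The SFE weight ω_sfe(a). -/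
def wsfe (P : Measure Ω) (D : Ω → ℕ) (A : Ω → Fin K → ℕ) (𝒜 : Finset (Fin K → ℕ))
    (a : Fin K → ℕ) : ℝ :=
  condDgivenA P D A 1 a * condDgivenA P D A 0 a * Pr P (evA A a) /
    ∑ a' ∈ 𝒜, condDgivenA P D A 1 a' * condDgivenA P D A 0 a' * Pr P (evA A a')

/-- The residual of the SFE regression of Y on (D, {1{A=a}}). -/
def residSFE (D : Ω → ℕ) (A : Ω → Fin K → ℕ) (𝒜 : Finset (Fin K → ℕ))
    (Ypot : ℕ → (Fin K → ℕ) → Ω → ℝ) (Δ : ℝ) (θ : (Fin K → ℕ) → ℝ) : Ω → ℝ :=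
  fun ω => Yobs D A 𝒜 Ypot ω - Δ * (D ω : ℝ) -
    ∑ a ∈ 𝒜, θ a * (if A ω = a then (1:ℝ) else 0)

/-- The residual of the saturated regression of Y on ({1{A=a}}, {D·1{A=a}}). -/
def residSAT (D : Ω → ℕ) (A : Ω → Fin K → ℕ) (𝒜 : Finset (Fin K → ℕ))
    (Ypot : ℕ → (Fin K → ℕ) → Ω → ℝ) (γ Δsat : (Fin K → ℕ) → ℝ) : Ω → ℝ :=
  fun ω => Yobs D A 𝒜 Ypot ω - (∑ a ∈ 𝒜, γ a * (if A ω = a then (1:ℝ) else 0)) -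
    ∑ a ∈ 𝒜, Δsat a * (D ω : ℝ) * (if A ω = a then (1:ℝ) else 0)


/-!
Let `R = D - E D - M (W - E W)` be the residual of the population regression of `D` on
`W = (A, A D)`, viewed as a function `R(d, a)` of the values of `(D, A)`. Using
`Var D = p (1 - p)`, the numerator of `ω_ind^i(a)` is `Σ_d R(d, a) P(D = d, A = a)` and that of
`ω_dce^i(a)` is `R(1, a) P(D = 1, A = a)`. Summing against `g(a)` therefore gives
`E[g(A) R] / denom` and `E[D R] / denom`. The normal equations `M Var(W) = Cov(D, W)` make `R`
centred and uncorrelated with every coordinate of `W`, so `E[R] = E[A_u R] = 0`, while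
`E[D R] = Var D - M Cov(W, D) = denom`, which is positive as a Schur complement in the
positive definite covariance matrix of `(D, A, A D)`.
-/

lemma Cov_comm (P : Measure Ω) (X Y : Ω → ℝ) : Cov P X Y = Cov P Y X := by
  simp only [Cov, mul_comm]

lemma Cov_const_left (P : Measure Ω) [IsProbabilityMeasure P] (c : ℝ) (X : Ω → ℝ) :
    Cov P (fun _ => c) X = 0 := by
  simp [Cov, Exp, integral_const_mul]

lemma Exp_mul_sub_sum_eq_Cov (P : Measure Ω) [IsProbabilityMeasure P] {ι : Type*} [Fintype ι]
    {Z X : Ω → ℝ} {Y : ι → Ω → ℝ} (m : ι → ℝ) (hZ : Integrable Z P)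
    (hZX : Integrable (fun ω => Z ω * X ω) P) (hZY : ∀ i, Integrable (fun ω => Z ω * Y i ω) P) :
    Exp P (fun ω => Z ω * (X ω - Exp P X - ∑ i, m i * (Y i ω - Exp P (Y i)))) =
      Cov P Z X - ∑ i, m i * Cov P Z (Y i) := by
  have hexpand : (fun ω => Z ω * (X ω - Exp P X - ∑ i, m i * (Y i ω - Exp P (Y i)))) =
      fun ω => Z ω * X ω - Exp P X * Z ω -
        ∑ i, (m i * (Z ω * Y i ω) - m i * Exp P (Y i) * Z ω) := by
    funext ω
    rw [mul_sub, mul_sub, Finset.mul_sum]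
    congr 1
    · ring
    · exact Finset.sum_congr rfl fun i _ => by ring
  have hterm : ∀ i, Integrable (fun ω => m i * (Z ω * Y i ω) - m i * Exp P (Y i) * Z ω) P :=
    fun i => ((hZY i).const_mul _).sub (hZ.const_mul _)
  have hlin : Integrable (fun ω => Z ω * X ω - Exp P X * Z ω) P := hZX.sub (hZ.const_mul _)
  simp only [Cov]
  rw [hexpand, Exp, integral_sub hlin (integrable_finsetSum _ fun i _ => hterm i),
    integral_sub hZX (hZ.const_mul _), integral_finsetSum _ fun i _ => hterm i, integral_const_mul]
  congr 1
  · simp only [Exp]; ring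
  · refine Finset.sum_congr rfl fun i _ => ?_
    rw [integral_sub ((hZY i).const_mul _) (hZ.const_mul _), integral_const_mul, integral_const_mul]
    simp only [Exp]; ring

section JointLaw

variable {P : Measure Ω} {D : Ω → ℕ} {A : Ω → Fin K → ℕ} {𝒜 : Finset (Fin K → ℕ)}

lemma measurableSet_evD (hD : Measurable D) (d : ℕ) : MeasurableSet (evD D d) :=
  hD (measurableSet_singleton d)

lemma measurableSet_evDA (hD : Measurable D) (hA : Measurable A) (d : ℕ) (a : Fin K → ℕ) :
    MeasurableSet (evDA D A d a) :=
  (hD (measurableSet_singleton d)).inter (hA (measurableSet_singleton a))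

lemma comp_eq_sum_indicator (hDbin : ∀ ω, D ω = 0 ∨ D ω = 1) (hAsupp : ∀ ω, A ω ∈ 𝒜)
    (f : ℕ → (Fin K → ℕ) → ℝ) (ω : Ω) :
    f (D ω) (A ω) =
      ∑ d ∈ ({0, 1} : Finset ℕ), ∑ a ∈ 𝒜, (evDA D A d a).indicator (fun _ => f d a) ω := by
  rw [Finset.sum_comm, Finset.sum_eq_single (A ω), Finset.sum_eq_single (D ω)]
  · simp [evDA]
  · intro d _ hd
    simp [evDA, Ne.symm hd]
  · intro h
    rcases hDbin ω with h' | h' <;> simp [h'] at h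
  · intro a _ ha
    exact Finset.sum_eq_zero fun d _ => by simp [evDA, Ne.symm ha]
  · exact fun h => absurd (hAsupp ω) h

lemma natCast_eq_indicator (hDbin : ∀ ω, D ω = 0 ∨ D ω = 1) (ω : Ω) :
    (D ω : ℝ) = (evD D 1).indicator (fun _ => (1 : ℝ)) ω := by
  rcases hDbin ω with h | h <;> simp [evD, h]

lemma Pr_mul_condA1 (hDbin : ∀ ω, D ω = 0 ∨ D ω = 1) (hp : Pr P (evD D 1) ≠ 0) (j : Fin K) :
    Pr P (evD D 1) * condA1 P D A j = Exp P (fun ω => (A ω j : ℝ) * D ω) := by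
  simp_rw [condA1, CE, ← natCast_eq_indicator hDbin]
  field_simp

lemma Pr_evD_zero [IsProbabilityMeasure P] (hD : Measurable D)
    (hDbin : ∀ ω, D ω = 0 ∨ D ω = 1) : Pr P (evD D 0) = 1 - Pr P (evD D 1) := by
  have hcompl : evD D 0 = (evD D 1)ᶜ := by
    ext ω
    rcases hDbin ω with h | h <;> simp [evD, h]
  rw [hcompl]
  exact probReal_compl_eq_one_sub (measurableSet_evD hD 1)

lemma Exp_D (hD : Measurable D) (hDbin : ∀ ω, D ω = 0 ∨ D ω = 1) :
    Exp P (fun ω => (D ω : ℝ)) = Pr P (evD D 1) := by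
  simp_rw [Exp, natCast_eq_indicator hDbin]
  rw [integral_indicator_const _ (measurableSet_evD hD 1), smul_eq_mul, mul_one]
  rfl

lemma varD_eq (hD : Measurable D) (hDbin : ∀ ω, D ω = 0 ∨ D ω = 1) :
    varD P D = Pr P (evD D 1) * (1 - Pr P (evD D 1)) := by
  have hidem : (fun ω => (D ω : ℝ) * D ω) = fun ω => (D ω : ℝ) :=
    funext fun ω => by rcases hDbin ω with h | h <;> simp [h]
  simp only [varD, Cov, hidem, Exp_D hD hDbin]
  ring

variable [IsFiniteMeasure P]

lemma integrable_comp (hD : Measurable D) (hA : Measurable A)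
    (hDbin : ∀ ω, D ω = 0 ∨ D ω = 1) (hAsupp : ∀ ω, A ω ∈ 𝒜) (f : ℕ → (Fin K → ℕ) → ℝ) :
    Integrable (fun ω => f (D ω) (A ω)) P := by
  simp_rw [comp_eq_sum_indicator hDbin hAsupp f]
  exact integrable_finsetSum _ fun d _ => integrable_finsetSum _ fun a _ =>
    (integrable_const _).indicator (measurableSet_evDA hD hA d a)

lemma Exp_comp_eq_sum (hD : Measurable D) (hA : Measurable A)
    (hDbin : ∀ ω, D ω = 0 ∨ D ω = 1) (hAsupp : ∀ ω, A ω ∈ 𝒜) (f : ℕ → (Fin K → ℕ) → ℝ) :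
    Exp P (fun ω => f (D ω) (A ω)) =
      ∑ d ∈ ({0, 1} : Finset ℕ), ∑ a ∈ 𝒜, f d a * Pr P (evDA D A d a) := by
  have hint : ∀ d a, Integrable ((evDA D A d a).indicator (fun _ => f d a)) P :=
    fun d a => (integrable_const _).indicator (measurableSet_evDA hD hA d a)
  simp_rw [Exp, comp_eq_sum_indicator hDbin hAsupp f]
  rw [integral_finsetSum _ fun d _ => integrable_finsetSum _ fun a _ => hint d a]
  refine Finset.sum_congr rfl fun d _ => ?_
  rw [integral_finsetSum _ fun a _ => hint d a]
  refine Finset.sum_congr rfl fun a _ => ?_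
  rw [integral_indicator_const _ (measurableSet_evDA hD hA d a), smul_eq_mul, mul_comm]
  rfl

lemma Pr_evA (hD : Measurable D) (hA : Measurable A) (hDbin : ∀ ω, D ω = 0 ∨ D ω = 1)
    (a : Fin K → ℕ) : Pr P (evA A a) = Pr P (evDA D A 0 a) + Pr P (evDA D A 1 a) := by
  have hsplit : evA A a = evDA D A 0 a ∪ evDA D A 1 a := by
    ext ω
    rcases hDbin ω with h | h <;> simp [evA, evDA, h]
  have hdisj : Disjoint (evDA D A 0 a) (evDA D A 1 a) :=
    Set.disjoint_left.2 fun ω h0 h1 => by simp_all [evDA]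
  rw [hsplit]
  exact measureReal_union hdisj (measurableSet_evDA hD hA 1 a)

end JointLaw

section Regression

open scoped Matrix

variable {P : Measure Ω} {D : Ω → ℕ} {A : Ω → Fin K → ℕ}

lemma varD_pos (hPD : (covDADmat P D A).PosDef) : 0 < varD P D :=
  hPD.diag_pos (i := Sum.inl ())

lemma Pr_evD_one_mem_Ioo (hD : Measurable D) (hDbin : ∀ ω, D ω = 0 ∨ D ω = 1)
    (hPD : (covDADmat P D A).PosDef) : Pr P (evD D 1) ∈ Set.Ioo 0 1 := by
  have h := varD_pos hPD
  rw [varD_eq hD hDbin] at h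
  have hp : 0 ≤ Pr P (evD D 1) := ENNReal.toReal_nonneg
  have hp0 : 0 < Pr P (evD D 1) := lt_of_le_of_ne hp fun h0 => by simp [← h0] at h
  exact ⟨hp0, by nlinarith⟩

lemma varWmat_posDef (hPD : (covDADmat P D A).PosDef) : (varWmat P D A).PosDef :=
  hPD.submatrix Sum.inr_injective

lemma covDADmat_eq_fromBlocks :
    covDADmat P D A = Matrix.fromBlocks (Matrix.of fun _ _ => varD P D)
      (Matrix.of fun (_ : Unit) v => covDW P D A v) (Matrix.of fun (_ : Unit) v => covDW P D A v)ᴴ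
      (varWmat P D A) := by
  ext (_ | u) (_ | v)
  · rfl
  · rfl
  · exact Cov_comm P _ _
  · rfl

lemma Minter_vecMul_varWmat (hPD : (covDADmat P D A).PosDef) :
    Minter P D A ᵥ* varWmat P D A = covDW P D A := by
  have hdet : IsUnit (varWmat P D A).det :=
    (Matrix.isUnit_iff_isUnit_det _).mp (varWmat_posDef hPD).isUnit
  change covDW P D A ᵥ* (varWmat P D A)⁻¹ ᵥ* varWmat P D A = _
  rw [Matrix.vecMul_vecMul, Matrix.nonsing_inv_mul _ hdet, Matrix.vecMul_one]

lemma denomI_pos (hPD : (covDADmat P D A).PosDef) : 0 < denomI P D A := by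
  have hV := varWmat_posDef hPD
  let _ := hV.isUnit.invertible
  set B : Matrix Unit (Fin K ⊕ Fin K) ℝ := Matrix.of fun _ v => covDW P D A v
  set x : Unit → ℝ := fun _ => 1
  -- At `(1, -V⁻¹ Cov(W, D))` the Schur identity leaves only the complement `denomI`.
  have hne : Sum.elim x (-(((varWmat P D A)⁻¹ * Bᴴ) *ᵥ x)) ≠ 0 := fun h => by
    simpa [x] using congrFun h (Sum.inl ())
  have hq := hPD.dotProduct_mulVec_pos hne
  rw [covDADmat_eq_fromBlocks, Matrix.dotProduct_mulVec,
    Matrix.schur_complement_eq₂₂ _ _ _ _ hV.1] at hq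
  simpa [x, B, denomI, Minter, Matrix.mul_apply, dotProduct, Matrix.vecMul] using hq

end Regression

def Wval (d : ℕ) (a : Fin K → ℕ) : Fin K ⊕ Fin K → ℝ :=
  Sum.elim (fun j => (a j : ℝ)) (fun j => (a j : ℝ) * d)

lemma Wvec_apply (D : Ω → ℕ) (A : Ω → Fin K → ℕ) (v : Fin K ⊕ Fin K) (ω : Ω) :
    Wvec D A v ω = Wval (D ω) (A ω) v := by
  cases v <;> rfl

def residDW (P : Measure Ω) (D : Ω → ℕ) (A : Ω → Fin K → ℕ) (d : ℕ) (a : Fin K → ℕ) : ℝ :=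
  d - Exp P (fun ω => (D ω : ℝ)) - ∑ v, Minter P D A v * (Wval d a v - Exp P (Wvec D A v))

section Residual

variable {P : Measure Ω} [IsProbabilityMeasure P] {D : Ω → ℕ} {A : Ω → Fin K → ℕ}
  {𝒜 : Finset (Fin K → ℕ)}

lemma Exp_mul_residDW (hD : Measurable D) (hA : Measurable A)
    (hDbin : ∀ ω, D ω = 0 ∨ D ω = 1) (hAsupp : ∀ ω, A ω ∈ 𝒜) (z : ℕ → (Fin K → ℕ) → ℝ) :
    Exp P (fun ω => z (D ω) (A ω) * residDW P D A (D ω) (A ω)) =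
      Cov P (fun ω => z (D ω) (A ω)) (fun ω => (D ω : ℝ)) -
        ∑ v, Minter P D A v * Cov P (fun ω => z (D ω) (A ω)) (Wvec D A v) := by
  simp_rw [residDW, ← Wvec_apply]
  refine Exp_mul_sub_sum_eq_Cov P _ (integrable_comp hD hA hDbin hAsupp z)
    (integrable_comp hD hA hDbin hAsupp fun d a => z d a * d) fun v => ?_
  simp_rw [Wvec_apply]
  exact integrable_comp hD hA hDbin hAsupp fun d a => z d a * Wval d a v

lemma Exp_residDW (hD : Measurable D) (hA : Measurable A)
    (hDbin : ∀ ω, D ω = 0 ∨ D ω = 1) (hAsupp : ∀ ω, A ω ∈ 𝒜) :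
    Exp P (fun ω => residDW P D A (D ω) (A ω)) = 0 := by
  simpa [Cov_const_left] using Exp_mul_residDW (P := P) hD hA hDbin hAsupp fun _ _ => 1

lemma Exp_Wval_mul_residDW (hD : Measurable D) (hA : Measurable A)
    (hDbin : ∀ ω, D ω = 0 ∨ D ω = 1) (hAsupp : ∀ ω, A ω ∈ 𝒜) (hPD : (covDADmat P D A).PosDef)
    (u : Fin K ⊕ Fin K) :
    Exp P (fun ω => Wval (D ω) (A ω) u * residDW P D A (D ω) (A ω)) = 0 := by
  rw [Exp_mul_residDW hD hA hDbin hAsupp fun d a => Wval d a u]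
  simp_rw [← Wvec_apply]
  have hnormal := congrFun (Minter_vecMul_varWmat hPD) u
  simp only [Matrix.vecMul, dotProduct, varWmat, Matrix.of_apply] at hnormal
  rw [Cov_comm, sub_eq_zero]
  exact (Finset.sum_congr rfl fun v _ => by rw [Cov_comm]).trans hnormal |>.symm

lemma Exp_D_mul_residDW (hD : Measurable D) (hA : Measurable A)
    (hDbin : ∀ ω, D ω = 0 ∨ D ω = 1) (hAsupp : ∀ ω, A ω ∈ 𝒜) :
    Exp P (fun ω => (D ω : ℝ) * residDW P D A (D ω) (A ω)) = denomI P D A :=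
  Exp_mul_residDW hD hA hDbin hAsupp fun d _ => (d : ℝ)

end Residual

section Weights

variable {P : Measure Ω} {D : Ω → ℕ} {A : Ω → Fin K → ℕ} {𝒜 : Finset (Fin K → ℕ)}

lemma residDW_eq (hD : Measurable D) (hDbin : ∀ ω, D ω = 0 ∨ D ω = 1)
    (hp : Pr P (evD D 1) ≠ 0) (d : ℕ) (a : Fin K → ℕ) :
    residDW P D A d a = d - Pr P (evD D 1)
      - ∑ j, Minter P D A (Sum.inl j) * ((a j : ℝ) - Exp P (fun ω => (A ω j : ℝ)))
      - ∑ j, Minter P D A (Sum.inr j) * ((a j : ℝ) * d - Pr P (evD D 1) * condA1 P D A j) := by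
  simp only [residDW, Fintype.sum_sum_type, Wval, Wvec, Sum.elim_inl, Sum.elim_inr,
    Exp_D hD hDbin, Pr_mul_condA1 hDbin hp]
  ring

lemma windI_eq [IsProbabilityMeasure P] (hD : Measurable D) (hA : Measurable A)
    (hDbin : ∀ ω, D ω = 0 ∨ D ω = 1) (hPD : (covDADmat P D A).PosDef) (a : Fin K → ℕ) :
    windI P D A a = (residDW P D A 0 a * Pr P (evDA D A 0 a)
      + residDW P D A 1 a * Pr P (evDA D A 1 a)) / denomI P D A := by
  obtain ⟨hp0, hp1⟩ := Pr_evD_one_mem_Ioo hD hDbin hPD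
  have hp : Pr P (evD D 1) ≠ 0 := hp0.ne'
  have hp' : 1 - Pr P (evD D 1) ≠ 0 := (sub_pos.2 hp1).ne'
  rw [windI, residDW_eq hD hDbin hp, residDW_eq hD hDbin hp, piP, piP, Pr_evA hD hA hDbin,
    Pr_evD_zero hD hDbin, varD_eq hD hDbin]
  congr 1
  set p := Pr P (evD D 1)
  set q0 := Pr P (evDA D A 0 a)
  set q1 := Pr P (evDA D A 1 a)
  have hvar : p * (1 - p) * (q1 / p - q0 / (1 - p)) = (1 - p) * q1 - p * q0 := by
    field_simp
  set E := fun j => Exp P (fun ω => (A ω j : ℝ))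
  have hinl : ∑ j, Minter P D A (Sum.inl j) * (q0 + q1) * ((a j : ℝ) - E j)
      = (q0 + q1) * ∑ j, Minter P D A (Sum.inl j) * ((a j : ℝ) - E j) := by
    rw [Finset.mul_sum]
    exact Finset.sum_congr rfl fun j _ => by ring
  set c := condA1 P D A
  have hinr : p * ∑ j, Minter P D A (Sum.inr j) * (q1 / p * (a j : ℝ) - (q0 + q1) * c j)
      = q0 * ∑ j, Minter P D A (Sum.inr j) * ((a j : ℝ) * ((0 : ℕ) : ℝ) - p * c j)
        + q1 * ∑ j, Minter P D A (Sum.inr j) * ((a j : ℝ) * ((1 : ℕ) : ℝ) - p * c j) := by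
    simp only [Finset.mul_sum, ← Finset.sum_add_distrib]
    exact Finset.sum_congr rfl fun j _ => by field_simp; push_cast; ring
  push_cast at hinr ⊢
  linear_combination hvar - hinl - hinr

lemma wdceI_eq (hD : Measurable D) (hDbin : ∀ ω, D ω = 0 ∨ D ω = 1)
    (hPD : (covDADmat P D A).PosDef) (a : Fin K → ℕ) :
    wdceI P D A a = residDW P D A 1 a * Pr P (evDA D A 1 a) / denomI P D A := by
  have hp : Pr P (evD D 1) ≠ 0 := (Pr_evD_one_mem_Ioo hD hDbin hPD).1.ne'
  rw [wdceI, residDW_eq hD hDbin hp, piP, varD_eq hD hDbin]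
  simp only [Nat.cast_one, mul_one]
  congr 1
  field_simp

lemma sum_mul_windI [IsProbabilityMeasure P] (hD : Measurable D) (hA : Measurable A)
    (hDbin : ∀ ω, D ω = 0 ∨ D ω = 1) (hAsupp : ∀ ω, A ω ∈ 𝒜) (hPD : (covDADmat P D A).PosDef)
    (g : (Fin K → ℕ) → ℝ) :
    ∑ a ∈ 𝒜, g a * windI P D A a =
      Exp P (fun ω => g (A ω) * residDW P D A (D ω) (A ω)) / denomI P D A := by
  rw [Exp_comp_eq_sum hD hA hDbin hAsupp fun d a => g a * residDW P D A d a,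
    Finset.sum_pair zero_ne_one, ← Finset.sum_add_distrib, Finset.sum_div]
  refine Finset.sum_congr rfl fun a _ => ?_
  rw [windI_eq hD hA hDbin hPD]
  ring

lemma sum_wdceI [IsProbabilityMeasure P] (hD : Measurable D) (hA : Measurable A)
    (hDbin : ∀ ω, D ω = 0 ∨ D ω = 1) (hAsupp : ∀ ω, A ω ∈ 𝒜) (hPD : (covDADmat P D A).PosDef) :
    ∑ a ∈ 𝒜, wdceI P D A a =
      Exp P (fun ω => (D ω : ℝ) * residDW P D A (D ω) (A ω)) / denomI P D A := by
  rw [Exp_comp_eq_sum hD hA hDbin hAsupp fun d a => (d : ℝ) * residDW P D A d a,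
    Finset.sum_pair zero_ne_one]
  simp only [Nat.cast_zero, zero_mul, Finset.sum_const_zero, Nat.cast_one, one_mul, zero_add]
  rw [Finset.sum_div]
  exact Finset.sum_congr rfl fun a _ => wdceI_eq hD hDbin hPD a

end Weights

theorem interaction_regression_weight_identities_general
    (P : Measure Ω) [IsProbabilityMeasure P]
    (D : Ω → ℕ) (A : Ω → Fin K → ℕ) (𝒜 : Finset (Fin K → ℕ))
    (hD : Measurable D) (hA : Measurable A)
    (hDbin : ∀ ω, D ω = 0 ∨ D ω = 1)
    (hAsupp : ∀ ω, A ω ∈ 𝒜)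
    (hPD : (covDADmat P D A).PosDef)
    :
    (∑ a ∈ 𝒜, wdceI P D A a) = 1
    ∧ (∑ a ∈ 𝒜, windI P D A a) = 0
    ∧ ∀ u : Fin K, (∑ a ∈ 𝒜, (a u : ℝ) * windI P D A a) = 0 := by
  refine ⟨?_, ?_, fun u => ?_⟩
  · rw [sum_wdceI hD hA hDbin hAsupp hPD, Exp_D_mul_residDW hD hA hDbin hAsupp,
      div_self (denomI_pos hPD).ne']
  · simpa [Exp_residDW hD hA hDbin hAsupp] using sum_mul_windI hD hA hDbin hAsupp hPD fun _ => 1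
  · rw [sum_mul_windI hD hA hDbin hAsupp hPD fun a => (a u : ℝ), div_eq_zero_iff]
    exact Or.inl (Exp_Wval_mul_residDW hD hA hDbin hAsupp hPD (Sum.inl u))

/-- Interaction-regression weight identities: Σ ω_dce^i(a) = 1, Σ ω_ind^i(a) = 0, and
Σ a_u·ω_ind^i(a) = 0 for every coordinate u. -/
theorem interaction_regression_weight_identities
    (P : Measure Ω) [IsProbabilityMeasure P]
    (D : Ω → ℕ) (A : Ω → Fin K → ℕ) (𝒜 : Finset (Fin K → ℕ))
    (hD : Measurable D) (hA : Measurable A)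
    (hDbin : ∀ ω, D ω = 0 ∨ D ω = 1)
    (hAsupp : ∀ ω, A ω ∈ 𝒜) (h𝒜0 : (0 : Fin K → ℕ) ∈ 𝒜)
    (hpos : ∀ d ∈ ({0, 1} : Finset ℕ), ∀ a ∈ 𝒜, 0 < Pr P (evDA D A d a))
    (hPD : (covDADmat P D A).PosDef)
    :
    (∑ a ∈ 𝒜, wdceI P D A a) = 1
    ∧ (∑ a ∈ 𝒜, windI P D A a) = 0
    ∧ ∀ u : Fin K, (∑ a ∈ 𝒜, (a u : ℝ) * windI P D A a) = 0 :=
  interaction_regression_weight_identities_general P D A 𝒜 hD hA hDbin hAsupp hPD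
end
end

section
/- (Strong sign preservation of the SFE estimand.) Let Assumption 2 hold and assume positivity. If μ(1,a) − μ(0,a) > 0 for every a∈𝒜, then Δ_sfe > 0. -/
open MeasureTheory ProbabilityTheory BigOperators

noncomputable section

variable {Ω : Type} [MeasurableSpace Ω] {K : ℕ}

/-!
Under strong exogeneity the expectation of the SFE residual times any function `g(D, A)` is the
sum over the cells `{D = d, A = a}` of `g(d,a) (μ(d,a) - Δ d - θ(a)) P(D = d, A = a)`.
The normal equation for `1{A = a}` then pins down `θ(a)`, and substituting it into the normal
equation for `D` shows that `Δ_sfe` is an average of the effects `μ(1,a) - μ(0,a)` with the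
positive weights `P(D=0,A=a) P(D=1,A=a) / P(A=a)`.
-/

theorem Finset.sum_sum_mul_ite_and_eq {α β R : Type*} [NonAssocSemiring R] [DecidableEq α]
    [DecidableEq β] {s : Finset α} {t : Finset β} {x : α} {y : β} (hx : x ∈ s) (hy : y ∈ t)
    (f : α → β → R) :
    ∑ i ∈ s, ∑ j ∈ t, f i j * (if x = i ∧ y = j then 1 else 0) = f x y := by
  simp [ite_and, hx, hy]

theorem ProbabilityTheory.IndepFun.integral_sub_const_mul_ite_eq {Ω β : Type*}
    [MeasurableSpace Ω] [MeasurableSpace β] [MeasurableSingletonClass β] [DecidableEq β]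
    {P : Measure Ω} [IsProbabilityMeasure P] {X : Ω → β} {Y : Ω → ℝ} (hXY : IndepFun X Y P)
    (hX : Measurable X) (hY : Integrable Y P) (x : β) (c : ℝ) :
    ∫ ω, (Y ω - c) * (if X ω = x then 1 else 0) ∂P = ((∫ ω, Y ω ∂P) - c) * P.real (X ⁻¹' {x}) := by
  have hind : Measurable fun b : β => if b = x then (1 : ℝ) else 0 :=
    measurable_const.ite (measurableSet_singleton x) measurable_const
  have hXYc : IndepFun (fun ω => if X ω = x then (1 : ℝ) else 0) (fun ω => Y ω - c) P :=
    hXY.comp hind (measurable_sub_const c)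
  have hprob : ∫ ω, (if X ω = x then (1 : ℝ) else 0) ∂P = P.real (X ⁻¹' {x}) := by
    rw [← integral_indicator_one (hX (measurableSet_singleton x))]
    congr 1 with ω
    by_cases h : X ω = x <;> simp [h]
  simp_rw [mul_comm _ (ite _ _ _)]
  rw [hXYc.integral_fun_mul_eq_mul_integral (hind.comp hX).aestronglyMeasurable
      (hY.sub (integrable_const c)).aestronglyMeasurable, hprob,
    integral_sub hY (integrable_const c), integral_const, probReal_univ, one_smul, mul_comm]

theorem Yobs_apply_eq {Ω : Type} {K : ℕ} {D : Ω → ℕ} {A : Ω → Fin K → ℕ}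
    {𝒜 : Finset (Fin K → ℕ)} {Ypot : ℕ → (Fin K → ℕ) → Ω → ℝ} {ω : Ω}
    (hD : D ω ∈ ({0, 1} : Finset ℕ)) (hA : A ω ∈ 𝒜) :
    Yobs D A 𝒜 Ypot ω = Ypot (D ω) (A ω) ω :=
  Finset.sum_sum_mul_ite_and_eq hD hA fun d a => Ypot d a ω

theorem residSFE_apply_eq {Ω : Type} {K : ℕ} {D : Ω → ℕ} {A : Ω → Fin K → ℕ}
    {𝒜 : Finset (Fin K → ℕ)} {Ypot : ℕ → (Fin K → ℕ) → Ω → ℝ} {ω : Ω}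
    (hD : D ω ∈ ({0, 1} : Finset ℕ)) (hA : A ω ∈ 𝒜) (Δ : ℝ) (θ : (Fin K → ℕ) → ℝ) :
    residSFE D A 𝒜 Ypot Δ θ ω = Ypot (D ω) (A ω) ω - Δ * D ω - θ (A ω) := by
  simp [residSFE, Yobs_apply_eq hD hA, hA]

theorem residSFE_mul_eq_sum_cells {Ω : Type} {K : ℕ} {D : Ω → ℕ} {A : Ω → Fin K → ℕ}
    {𝒜 : Finset (Fin K → ℕ)} {Ypot : ℕ → (Fin K → ℕ) → Ω → ℝ} {ω : Ω}
    (hD : D ω ∈ ({0, 1} : Finset ℕ)) (hA : A ω ∈ 𝒜) (Δ : ℝ) (θ : (Fin K → ℕ) → ℝ)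
    (g : ℕ → (Fin K → ℕ) → ℝ) :
    residSFE D A 𝒜 Ypot Δ θ ω * g (D ω) (A ω) =
      ∑ d ∈ ({0, 1} : Finset ℕ), ∑ a ∈ 𝒜, g d a *
        ((Ypot d a ω - (Δ * d + θ a)) * (if D ω = d ∧ A ω = a then 1 else 0)) := by
  simp_rw [← mul_assoc]
  rw [Finset.sum_sum_mul_ite_and_eq hD hA, residSFE_apply_eq hD hA]
  ring

section Moments

variable {D : Ω → ℕ} {A : Ω → Fin K → ℕ} {𝒜 : Finset (Fin K → ℕ)}
  {Ypot : ℕ → (Fin K → ℕ) → Ω → ℝ} {P : Measure Ω} [IsProbabilityMeasure P]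

theorem exp_sub_mul_cell_of_indepFun (hD : Measurable D) (hA : Measurable A) {d : ℕ}
    {a : Fin K → ℕ} (hY : Integrable (Ypot d a) P)
    (hindep : IndepFun (fun ω => (D ω, A ω)) (Ypot d a) P) (c : ℝ) :
    Exp P (fun ω => (Ypot d a ω - c) * (if D ω = d ∧ A ω = a then 1 else 0)) =
      (muP P Ypot d a - c) * Pr P (evDA D A d a) := by
  have h := hindep.integral_sub_const_mul_ite_eq (hD.prodMk hA) hY (d, a) c
  have hcell : (fun ω => (D ω, A ω)) ⁻¹' {(d, a)} = evDA D A d a := by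
    ext ω
    simp [evDA]
  simp only [Prod.mk.injEq, hcell] at h
  exact h

theorem exp_residSFE_mul_eq_sum_cells (hD : Measurable D) (hA : Measurable A)
    (hDbin : ∀ ω, D ω ∈ ({0, 1} : Finset ℕ)) (hAsupp : ∀ ω, A ω ∈ 𝒜)
    (hInt : ∀ d ∈ ({0, 1} : Finset ℕ), ∀ a ∈ 𝒜, Integrable (Ypot d a) P)
    (hIndep : ∀ d ∈ ({0, 1} : Finset ℕ), ∀ a ∈ 𝒜,
      IndepFun (fun ω => (D ω, A ω)) (Ypot d a) P)
    (Δ : ℝ) (θ : (Fin K → ℕ) → ℝ) (g : ℕ → (Fin K → ℕ) → ℝ) :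
    Exp P (fun ω => residSFE D A 𝒜 Ypot Δ θ ω * g (D ω) (A ω)) =
      ∑ d ∈ ({0, 1} : Finset ℕ), ∑ a ∈ 𝒜,
        g d a * ((muP P Ypot d a - (Δ * d + θ a)) * Pr P (evDA D A d a)) := by
  have hcell_int : ∀ d ∈ ({0, 1} : Finset ℕ), ∀ a ∈ 𝒜, ∀ c : ℝ, Integrable
      (fun ω => (Ypot d a ω - c) * (if D ω = d ∧ A ω = a then (1 : ℝ) else 0)) P := by
    intro d hd a ha c
    refine (hInt d hd a ha |>.sub (integrable_const c)).mul_bdd (c := 1) ?_ ?_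
    · exact (Measurable.ite ((hD (measurableSet_singleton d)).inter
        (hA (measurableSet_singleton a))) measurable_const measurable_const).aestronglyMeasurable
    · exact .of_forall fun ω => by split_ifs <;> simp
  simp only [Exp, residSFE_mul_eq_sum_cells (hDbin _) (hAsupp _)]
  rw [integral_finsetSum _ fun d hd => integrable_finsetSum _ fun a ha =>
    (hcell_int d hd a ha _).const_mul _]
  refine Finset.sum_congr rfl fun d hd => ?_
  rw [integral_finsetSum _ fun a ha => (hcell_int d hd a ha _).const_mul _]
  refine Finset.sum_congr rfl fun a ha => ?_
  rw [integral_const_mul]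
  congr 1
  exact exp_sub_mul_cell_of_indepFun hD hA (hInt d hd a ha) (hIndep d hd a ha) _

end Moments

theorem sum_weight_mul_sub_eq_zero_of_normal_equations {ι : Type*} {s : Finset ι}
    {n₀ n₁ μ₀ μ₁ θ : ι → ℝ} {Δ : ℝ} (hn : ∀ a ∈ s, n₀ a + n₁ a ≠ 0)
    (hcell : ∀ a ∈ s, (μ₀ a - θ a) * n₀ a + (μ₁ a - (Δ + θ a)) * n₁ a = 0)
    (htreat : ∑ a ∈ s, (μ₁ a - (Δ + θ a)) * n₁ a = 0) :
    ∑ a ∈ s, n₀ a * n₁ a / (n₀ a + n₁ a) * (μ₁ a - μ₀ a - Δ) = 0 := by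
  rw [← htreat]
  refine Finset.sum_congr rfl fun a ha => ?_
  field_simp [hn a ha]
  linear_combination -n₁ a * hcell a ha

theorem pos_of_sum_mul_sub_eq_zero {ι : Type*} {s : Finset ι} (hs : s.Nonempty) {w τ : ι → ℝ}
    {Δ : ℝ} (hw : ∀ a ∈ s, 0 < w a) (hτ : ∀ a ∈ s, 0 < τ a)
    (h : ∑ a ∈ s, w a * (τ a - Δ) = 0) : 0 < Δ := by
  by_contra! hΔ
  have : 0 < ∑ a ∈ s, w a * (τ a - Δ) :=
    Finset.sum_pos (fun a ha => mul_pos (hw a ha) (by linarith [hτ a ha])) hs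
  exact this.ne' h

theorem sfe_strong_sign_preservation_general
    (P : Measure Ω) [IsProbabilityMeasure P]
    (D : Ω → ℕ) (A : Ω → Fin K → ℕ) (𝒜 : Finset (Fin K → ℕ))
    (Ypot : ℕ → (Fin K → ℕ) → Ω → ℝ)
    (hD : Measurable D) (hA : Measurable A)
    (hDbin : ∀ ω, D ω = 0 ∨ D ω = 1)
    (hAsupp : ∀ ω, A ω ∈ 𝒜)
    (hInt : ∀ d ∈ ({0, 1} : Finset ℕ), ∀ a ∈ 𝒜, Integrable (Ypot d a) P)
    (hpos : ∀ d ∈ ({0, 1} : Finset ℕ), ∀ a ∈ 𝒜, 0 < Pr P (evDA D A d a))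
    (hIndep : ∀ d ∈ ({0, 1} : Finset ℕ), ∀ a ∈ 𝒜,
      IndepFun (fun ω => (D ω, A ω)) (Ypot d a) P)
    (Δsfe : ℝ) (θ : (Fin K → ℕ) → ℝ)
    (hO1 : Exp P (fun ω => residSFE D A 𝒜 Ypot Δsfe θ ω * (D ω : ℝ)) = 0)
    (hO2 : ∀ a ∈ 𝒜,
      Exp P (fun ω => residSFE D A 𝒜 Ypot Δsfe θ ω * (if A ω = a then (1:ℝ) else 0)) = 0)
    (hEff : ∀ a ∈ 𝒜, 0 < muP P Ypot 1 a - muP P Ypot 0 a) :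
    0 < Δsfe := by
  have hmoment := exp_residSFE_mul_eq_sum_cells hD hA (by simpa using hDbin) hAsupp hInt hIndep
    Δsfe θ
  have hcell : ∀ a ∈ 𝒜, (muP P Ypot 0 a - θ a) * Pr P (evDA D A 0 a) +
      (muP P Ypot 1 a - (Δsfe + θ a)) * Pr P (evDA D A 1 a) = 0 := by
    intro a ha
    have h := hmoment fun _ a' => if a' = a then 1 else 0
    beta_reduce at h
    rw [hO2 a ha] at h
    simpa [ha] using h.symm
  have htreat : ∑ a ∈ 𝒜, (muP P Ypot 1 a - (Δsfe + θ a)) * Pr P (evDA D A 1 a) = 0 := by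
    simpa [hO1] using (hmoment fun d _ => (d : ℝ)).symm
  have hn₀ : ∀ a ∈ 𝒜, 0 < Pr P (evDA D A 0 a) := hpos 0 (by simp)
  have hn₁ : ∀ a ∈ 𝒜, 0 < Pr P (evDA D A 1 a) := hpos 1 (by simp)
  have hweighted := sum_weight_mul_sub_eq_zero_of_normal_equations
    (fun a ha => (add_pos (hn₀ a ha) (hn₁ a ha)).ne') hcell htreat
  obtain ⟨ω⟩ := nonempty_of_isProbabilityMeasure P
  exact pos_of_sum_mul_sub_eq_zero ⟨A ω, hAsupp ω⟩
    (fun a ha => div_pos (mul_pos (hn₀ a ha) (hn₁ a ha)) (add_pos (hn₀ a ha) (hn₁ a ha)))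
    hEff hweighted

/-- Strong sign preservation of the SFE estimand: if μ(1,a) − μ(0,a) > 0 for every a ∈ 𝒜,
then Δ_sfe > 0. -/
theorem sfe_strong_sign_preservation
    (P : Measure Ω) [IsProbabilityMeasure P]
    (D : Ω → ℕ) (A : Ω → Fin K → ℕ) (𝒜 : Finset (Fin K → ℕ))
    (Ypot : ℕ → (Fin K → ℕ) → Ω → ℝ)
    (hD : Measurable D) (hA : Measurable A)
    (hDbin : ∀ ω, D ω = 0 ∨ D ω = 1)
    (hAsupp : ∀ ω, A ω ∈ 𝒜) (h𝒜0 : (0 : Fin K → ℕ) ∈ 𝒜)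
    (hInt : ∀ d ∈ ({0, 1} : Finset ℕ), ∀ a ∈ 𝒜, Integrable (Ypot d a) P)
    (hpos : ∀ d ∈ ({0, 1} : Finset ℕ), ∀ a ∈ 𝒜, 0 < Pr P (evDA D A d a))
    (hIndep : ∀ d ∈ ({0, 1} : Finset ℕ), ∀ a ∈ 𝒜,
      IndepFun (fun ω => (D ω, A ω)) (Ypot d a) P)
    (Δsfe : ℝ) (θ : (Fin K → ℕ) → ℝ)
    (hO1 : Exp P (fun ω => residSFE D A 𝒜 Ypot Δsfe θ ω * (D ω : ℝ)) = 0)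
    (hO2 : ∀ a ∈ 𝒜,
      Exp P (fun ω => residSFE D A 𝒜 Ypot Δsfe θ ω * (if A ω = a then (1:ℝ) else 0)) = 0)
    (hEff : ∀ a ∈ 𝒜, 0 < muP P Ypot 1 a - muP P Ypot 0 a) :
    0 < Δsfe :=
  sfe_strong_sign_preservation_general P D A 𝒜 Ypot hD hA hDbin hAsupp hInt hpos hIndep Δsfe θ hO1
    hO2 hEff
end
end

section
/- (Sequential ignorability implies strong exogeneity.) Suppose sequential ignorability (Assumption 3) holds. Then for every (d,a)∈{0,1}×𝒜 and every x∈𝒳 with P(X=x)>0, the pair (D,A) is independent of Y(d,a) under the conditional probability measure P(·|X=x); that is, for all (d̃,ã,y,a,d), P(Y(d̃,ã)≤y, A=a, D=d | X=x) = P(Y(d̃,ã)≤y | X=x)·P(A=a, D=d | X=x). -/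
/-!
Work under `μ = P(·|X=x)`. Projecting (i) gives `Y(d̃,ã) ⫫ D` under `μ`, and (ii) gives
`Y(d̃,ã) ⫫ A(d)` under `μ(·|D=d) = P(·|D=d, X=x)`. On `{D = d}` the realized action is `A(d)`,
and chaining the two independences,
`μ(Y ≤ y, A(d) = a, D = d) = μ(Y ≤ y | D = d) μ(A(d) = a | D = d) μ(D = d) = μ(Y ≤ y) μ(A(d) = a, D = d)`.
-/

open MeasureTheory ProbabilityTheory BigOperators

noncomputable section

variable {Ω : Type} [MeasurableSpace Ω] {K : ℕ}

theorem measure_inter_inter_eq_mul_of_indep_of_cond_indep {Ω' : Type*} [MeasurableSpace Ω']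
    {μ : Measure Ω'} [IsFiniteMeasure μ] {E F G : Set Ω'} (hG : MeasurableSet G)
    (hEG : μ (E ∩ G) = μ E * μ G) (hEF : μ[E ∩ F | G] = μ[E | G] * μ[F | G]) :
    μ (E ∩ F ∩ G) = μ E * μ (F ∩ G) := by
  have cond_mul (S : Set Ω') : μ[S | G] * μ G = μ (S ∩ G) := by
    rw [cond_mul_eq_inter hG, Set.inter_comm]
  calc μ (E ∩ F ∩ G) = μ[E | G] * μ G * μ[F | G] := by rw [← cond_mul, hEF]; ring
    _ = μ E * (μ[F | G] * μ G) := by rw [cond_mul, hEG]; ring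
    _ = μ E * μ (F ∩ G) := by rw [cond_mul]

theorem setOf_apply_self_eq_and_eq {Ω' α β : Type*} (A : α → Ω' → β) (D : Ω' → α) (a : β)
    (d : α) : {ω | A (D ω) ω = a ∧ D ω = d} = {ω | A d ω = a} ∩ {ω | D ω = d} := by
  ext ω
  constructor
  · rintro ⟨hA, rfl⟩
    exact ⟨hA, rfl⟩
  · rintro ⟨hA, hD⟩
    exact ⟨hD ▸ hA, hD⟩

theorem seq_ignorability_implies_strong_exogeneity_general
    (P : Measure Ω) [IsProbabilityMeasure P]
    (D : Ω → ℕ) (X : Ω → ℕ) (𝒳 : Finset ℕ)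
    (Apot : ℕ → Ω → Fin K → ℕ) (𝒜 : Finset (Fin K → ℕ))
    (Ypot : ℕ → (Fin K → ℕ) → Ω → ℝ)
    (hD : Measurable D) (hX : Measurable X)
    -- Assumption 3 (i): (Y(d',a), A(d)) ⫫ D under P(·|X=x)
    (hSI1 : ∀ d' d : ℕ, (d' = 0 ∨ d' = 1) → (d = 0 ∨ d = 1) → ∀ a ∈ 𝒜, ∀ x ∈ 𝒳,
      0 < P {ω | X ω = x} →
      IndepFun (fun ω => (Ypot d' a ω, Apot d ω)) D (P[|{ω | X ω = x}]))
    -- Assumption 3 (ii): Y(d',a) ⫫ A(d) under P(·|D=d, X=x)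
    (hSI2 : ∀ d' d : ℕ, (d' = 0 ∨ d' = 1) → (d = 0 ∨ d = 1) → ∀ a ∈ 𝒜, ∀ x ∈ 𝒳,
      0 < P {ω | X ω = x} →
      IndepFun (Ypot d' a) (Apot d) (P[|{ω | D ω = d ∧ X ω = x}])) :
    ∀ dtil : ℕ, (dtil = 0 ∨ dtil = 1) → ∀ atil ∈ 𝒜, ∀ y : ℝ,
    ∀ d : ℕ, (d = 0 ∨ d = 1) → ∀ a ∈ 𝒜, ∀ x ∈ 𝒳, 0 < P {ω | X ω = x} →
      P[|{ω | X ω = x}] {ω | Ypot dtil atil ω ≤ y ∧ Apot (D ω) ω = a ∧ D ω = d}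
        = P[|{ω | X ω = x}] {ω | Ypot dtil atil ω ≤ y}
          * P[|{ω | X ω = x}] {ω | Apot (D ω) ω = a ∧ D ω = d} := by
  intro dtil hdtil atil hatil y d hd a ha x hx hPx
  have hXx : MeasurableSet {ω | X ω = x} := hX (measurableSet_singleton x)
  have hDd : MeasurableSet {ω | D ω = d} := hD (measurableSet_singleton d)
  have hYD : IndepFun (Ypot dtil atil) D (P[|{ω | X ω = x}]) :=
    (hSI1 dtil d hdtil hd atil hatil x hx hPx).comp measurable_fst measurable_id
  have hYA : IndepFun (Ypot dtil atil) (Apot d) (P[|{ω | X ω = x}][|{ω | D ω = d}]) := by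
    rw [cond_cond_eq_cond_inter hXx hDd, Set.inter_comm, ← Set.ofPred_and]
    exact hSI2 dtil d hdtil hd atil hatil x hx hPx
  rw [Set.ofPred_and, setOf_apply_self_eq_and_eq, ← Set.inter_assoc]
  exact measure_inter_inter_eq_mul_of_indep_of_cond_indep hDd
    (hYD.measure_inter_preimage_eq_mul _ _ measurableSet_Iic (measurableSet_singleton d))
    (hYA.measure_inter_preimage_eq_mul _ _ measurableSet_Iic (measurableSet_singleton a))

/-- Sequential ignorability implies strong exogeneity: under Assumption 3, for every x with
P(X=x) > 0 the pair (D,A) (with realized actions A = A(D)) is independent of each potential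
outcome Y(d̃,ã) under P(·|X=x), i.e. the joint CDF-type probabilities factorize. -/
theorem seq_ignorability_implies_strong_exogeneity
    (P : Measure Ω) [IsProbabilityMeasure P]
    (D : Ω → ℕ) (X : Ω → ℕ) (𝒳 : Finset ℕ)
    (Apot : ℕ → Ω → Fin K → ℕ) (𝒜 : Finset (Fin K → ℕ))
    (Ypot : ℕ → (Fin K → ℕ) → Ω → ℝ)
    (hD : Measurable D) (hX : Measurable X) (hApot : ∀ d, Measurable (Apot d))
    (hY : ∀ d a, Measurable (Ypot d a))
    (hDbin : ∀ ω, D ω = 0 ∨ D ω = 1)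
    (hXsupp : ∀ ω, X ω ∈ 𝒳) (hAsupp : ∀ d ω, Apot d ω ∈ 𝒜)
    -- Assumption 3 (i): (Y(d',a), A(d)) ⫫ D under P(·|X=x)
    (hSI1 : ∀ d' d : ℕ, (d' = 0 ∨ d' = 1) → (d = 0 ∨ d = 1) → ∀ a ∈ 𝒜, ∀ x ∈ 𝒳,
      0 < P {ω | X ω = x} →
      IndepFun (fun ω => (Ypot d' a ω, Apot d ω)) D (P[|{ω | X ω = x}]))
    -- Assumption 3 (ii): Y(d',a) ⫫ A(d) under P(·|D=d, X=x)
    (hSI2 : ∀ d' d : ℕ, (d' = 0 ∨ d' = 1) → (d = 0 ∨ d = 1) → ∀ a ∈ 𝒜, ∀ x ∈ 𝒳,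
      0 < P {ω | X ω = x} →
      IndepFun (Ypot d' a) (Apot d) (P[|{ω | D ω = d ∧ X ω = x}]))
    -- Overlap: 0 < P(D=d | X=x)
    (hOv1 : ∀ d : ℕ, (d = 0 ∨ d = 1) → ∀ x ∈ 𝒳, 0 < P {ω | X ω = x} →
      0 < P[|{ω | X ω = x}] {ω | D ω = d})
    -- Overlap: 0 < P(A(d)=a | D=d, X=x)
    (hOv2 : ∀ d : ℕ, (d = 0 ∨ d = 1) → ∀ a ∈ 𝒜, ∀ x ∈ 𝒳, 0 < P {ω | X ω = x} →
      0 < P[|{ω | D ω = d ∧ X ω = x}] {ω | Apot d ω = a}) :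
    ∀ dtil : ℕ, (dtil = 0 ∨ dtil = 1) → ∀ atil ∈ 𝒜, ∀ y : ℝ,
    ∀ d : ℕ, (d = 0 ∨ d = 1) → ∀ a ∈ 𝒜, ∀ x ∈ 𝒳, 0 < P {ω | X ω = x} →
      P[|{ω | X ω = x}] {ω | Ypot dtil atil ω ≤ y ∧ Apot (D ω) ω = a ∧ D ω = d}
        = P[|{ω | X ω = x}] {ω | Ypot dtil atil ω ≤ y}
          * P[|{ω | X ω = x}] {ω | Apot (D ω) ω = a ∧ D ω = d} :=
  seq_ignorability_implies_strong_exogeneity_general P D X 𝒳 Apot 𝒜 Ypot hD hX hSI1 hSI2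
end
end
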